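/- In a crystallographic group Γ, the translations are precisely those elements having only finitely many conjugates in Γ, and consequently the center Z(Γ) consists entirely of translations. -/

import Mathlib

noncomputable section

/-- Euclidean `n`-space. -/
abbrev E (n : ℕ) := EuclideanSpace ℝ (Fin n)

/-- An isometry `a + A` of `E n`, acting by `x ↦ a + A x`, with `A` a linear isometry
(an element of `O(n)`). -/
@[ext] structure Iso (n : ℕ) where
  a : E n
  A : E n ≃ₗᵢ[ℝ] E n

namespace Iso

variable {n : ℕ}

instance : Mul (Iso n) := ⟨fun x y => ⟨x.a + x.A y.a, y.A.trans x.A⟩⟩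
instance : One (Iso n) := ⟨⟨0, LinearIsometryEquiv.refl ℝ (E n)⟩⟩
instance : Inv (Iso n) := ⟨fun x => ⟨-(x.A.symm x.a), x.A.symm⟩⟩

@[simp] lemma mul_a (x y : Iso n) : (x * y).a = x.a + x.A y.a := rfl
@[simp] lemma mul_A (x y : Iso n) : (x * y).A = y.A.trans x.A := rfl
@[simp] lemma one_a : (1 : Iso n).a = 0 := rfl
@[simp] lemma one_A : (1 : Iso n).A = LinearIsometryEquiv.refl ℝ (E n) := rfl
@[simp] lemma inv_a (x : Iso n) : (x⁻¹).a = -(x.A.symm x.a) := rfl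
@[simp] lemma inv_A (x : Iso n) : (x⁻¹).A = x.A.symm := rfl

/-- The group of isometries of `E n`, with composition as multiplication. -/
instance : Group (Iso n) where
  mul_assoc x y z := by
    refine Iso.ext ?_ ?_
    · simp [add_assoc]
    · ext v; simp
  one_mul x := by refine Iso.ext ?_ ?_ <;> simp
  mul_one x := by refine Iso.ext ?_ ?_ <;> simp
  inv_mul_cancel x := by
    refine Iso.ext ?_ ?_
    · simp
    · ext v; simp

/-- The action of the isometry `a + A` on a point `x` of `E n`: `x ↦ a + A x`. -/
def act (g : Iso n) (x : E n) : E n := g.a + g.A x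

/-- The translation `a + I`. -/
def trans (a : E n) : Iso n := ⟨a, LinearIsometryEquiv.refl ℝ (E n)⟩

/-- `g` is a translation if its linear part is the identity. -/
def IsTranslation (g : Iso n) : Prop := g.A = LinearIsometryEquiv.refl ℝ (E n)

/-- The subgroup of all translations of `E n`. -/
def translations (n : ℕ) : Subgroup (Iso n) where
  carrier := {g | g.IsTranslation}
  mul_mem' := by
    intro x y hx hy
    simp only [Set.mem_setOf_eq, IsTranslation] at *
    rw [mul_A, hx, hy]; simp
  one_mem' := rfl
  inv_mem' := by
    intro x hx
    simp only [Set.mem_setOf_eq, IsTranslation] at *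
    rw [inv_A, hx]; rfl

/-- The set of translation vectors of a set `S` of isometries:
`{a : E n | a + I ∈ S}`. -/
def transVecs (S : Set (Iso n)) : Set (E n) := {a | Iso.trans a ∈ S}

/-- `Span(S)`: the real linear span of the translation vectors of `S`. -/
def spanS (S : Set (Iso n)) : Submodule ℝ (E n) :=
  Submodule.span ℝ (transVecs S)

/-- A crystallographic (space) group: a group of isometries of `E n` that acts
properly discontinuously (equivalently, is discrete) and cocompactly. -/
def IsCrystallographic (Γ : Subgroup (Iso n)) : Prop :=
  (∀ K : Set (E n), IsCompact K →
      {g : Iso n | g ∈ Γ ∧ ((act g '' K) ∩ K).Nonempty}.Finite) ∧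
  ∃ K : Set (E n), IsCompact K ∧ ∀ x : E n, ∃ g ∈ Γ, g.act x ∈ K

/-- `N` is a normal subgroup of `Γ`. -/
def IsNormalIn (N Γ : Subgroup (Iso n)) : Prop :=
  N ≤ Γ ∧ ∀ g ∈ Γ, ∀ x ∈ N, g * x * g⁻¹ ∈ N

/-- The completion of `S` in `Γ`:
`S̄ = {b+B ∈ Γ : b ∈ Span(S) and Span(S)ᗮ ⊆ Fix(B)}`. -/
def completion (Γ : Subgroup (Iso n)) (S : Set (Iso n)) : Set (Iso n) :=
  {g | g ∈ Γ ∧ g.a ∈ spanS S ∧ ∀ x ∈ (spanS S)ᗮ, g.A x = x}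

end Iso

/-!
A conjugate `k g k⁻¹` of a translation `g = a + I` is the translation by `k.A a`, so all of them
move the origin by `‖a‖`, and proper discontinuity leaves only finitely many. Conversely, if `g`
is not a translation then no conjugate `h` is one, so the finitely many linear maps `h.A - I` are
nonzero and, as a real vector space is not a finite union of proper subspaces, they are all
large at some point `v`. But cocompactness puts an orbit point `γ 0` within a fixed distance `r`
of `v`; the conjugate `γ g γ⁻¹` moves `γ 0` by `‖g.a‖`, hence moves `v` by at most `‖g.a‖ + 2r`,
which bounds `‖(h.A - I) v‖` for `h = γ g γ⁻¹`. A central element is its own only conjugate.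
-/

open Filter Bornology in
theorem LinearMap.exists_forall_lt_norm_apply {𝕜 V W ι : Type*} [NontriviallyNormedField 𝕜]
    [AddCommGroup V] [Module 𝕜 V] [NormedAddCommGroup W] [NormedSpace 𝕜 W] [Finite ι]
    (f : ι → V →ₗ[𝕜] W) (hf : ∀ i, f i ≠ 0) (C : ℝ) : ∃ v, ∀ i, C < ‖f i v‖ := by
  obtain ⟨u, hu⟩ : ∃ u, ∀ i, u ∉ LinearMap.ker (f i) := by
    by_contra! h
    obtain ⟨i, hi⟩ := Subspace.exists_eq_top_of_iUnion_eq_univ (p := fun i => LinearMap.ker (f i))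
      (Set.eq_univ_of_forall fun u => Set.mem_iUnion.2 (h u))
    exact hf i (LinearMap.ker_eq_top.1 hi)
  have hlarge : ∀ i, ∀ᶠ c : 𝕜 in cobounded 𝕜, C < ‖f i (c • u)‖ := fun i => by
    simp only [map_smul, norm_smul]
    exact (tendsto_norm_cobounded_atTop.atTop_mul_const
      (norm_pos_iff.2 (hu i))).eventually_gt_atTop C
  obtain ⟨c, hc⟩ := (eventually_all.2 hlarge).exists
  exact ⟨c • u, hc⟩

namespace Iso

variable {n : ℕ}

@[simp] lemma act_zero (g : Iso n) : g.act 0 = g.a := by simp [act]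

lemma act_mul (g h : Iso n) (x : E n) : (g * h).act x = g.act (h.act x) := by
  simp [act, add_assoc]

lemma act_inv_act (g : Iso n) (x : E n) : g⁻¹.act (g.act x) = x := by
  rw [← act_mul, inv_mul_cancel]; simp [act]

lemma dist_act_act (g : Iso n) (x y : E n) : dist (g.act x) (g.act y) = dist x y := by
  simp [act, dist_eq_norm, ← map_sub]

lemma isTranslation_iff (g : Iso n) : g.IsTranslation ↔ ∀ x, g.A x = x :=
  ⟨fun h x => by rw [h]; rfl, fun h => LinearIsometryEquiv.ext h⟩

lemma isTranslation_conj_iff (k g : Iso n) : (k * g * k⁻¹).IsTranslation ↔ g.IsTranslation := by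
  simp only [isTranslation_iff, mul_A, inv_A, LinearIsometryEquiv.trans_apply]
  refine ⟨fun h x => k.A.injective ?_, fun h x => by simp [h]⟩
  simpa using h (k.A x)

lemma conj_a_of_isTranslation {g : Iso n} (hg : g.IsTranslation) (k : Iso n) :
    (k * g * k⁻¹).a = k.A g.a := by
  simp [(isTranslation_iff g).1 hg]

lemma dist_conj_act_self (k g : Iso n) (x : E n) :
    dist ((k * g * k⁻¹).act (k.act x)) (k.act x) = dist (g.act x) x := by
  rw [act_mul, act_mul, act_inv_act, dist_act_act]

lemma dist_act_self_le (g : Iso n) (x y : E n) :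
    dist (g.act y) y ≤ dist (g.act x) x + 2 * dist x y := by
  have := dist_act_act g x y
  linarith [dist_triangle4 (g.act y) (g.act x) x y, dist_comm (g.act y) (g.act x)]

lemma norm_A_sub_le (g : Iso n) (x : E n) : ‖g.A x - x‖ ≤ ‖g.a‖ + dist (g.act x) x := by
  have : g.A x - x = (g.act x - x) - g.a := by simp only [act]; abel
  rw [this, ← dist_eq_norm]
  exact (norm_sub_le (g.act x - x) g.a).trans_eq (add_comm _ _)

lemma finite_conjugates_of_isTranslation {Γ : Subgroup (Iso n)}
    (hΓ : ∀ K : Set (E n), IsCompact K →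
      {g : Iso n | g ∈ Γ ∧ ((act g '' K) ∩ K).Nonempty}.Finite)
    {g : Iso n} (hgΓ : g ∈ Γ) (hg : g.IsTranslation) :
    {h : Iso n | ∃ k ∈ Γ, k * g * k⁻¹ = h}.Finite := by
  refine (hΓ _ (isCompact_closedBall 0 ‖g.a‖)).subset ?_
  rintro _ ⟨k, hk, rfl⟩
  refine ⟨Γ.mul_mem (Γ.mul_mem hk hgΓ) (Γ.inv_mem hk), (k * g * k⁻¹).a,
    ⟨0, by simp, by simp⟩, ?_⟩
  simp [conj_a_of_isTranslation hg]

lemma exists_forall_exists_dist_a_le {Γ : Subgroup (Iso n)}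
    (hΓ : ∃ K : Set (E n), IsCompact K ∧ ∀ x : E n, ∃ g ∈ Γ, g.act x ∈ K) :
    ∃ r : ℝ, ∀ v : E n, ∃ γ ∈ Γ, dist γ.a v ≤ r := by
  obtain ⟨K, hK, hcover⟩ := hΓ
  obtain ⟨r, hr⟩ := hK.isBounded.subset_closedBall 0
  refine ⟨r, fun v => ?_⟩
  obtain ⟨γ, hγ, hγv⟩ := hcover v
  refine ⟨γ⁻¹, Γ.inv_mem hγ, ?_⟩
  calc dist γ⁻¹.a v = dist (γ⁻¹.act (γ.act v)) (γ⁻¹.act 0) := by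
        rw [act_inv_act, act_zero, dist_comm]
    _ ≤ r := by rw [dist_act_act]; exact hr hγv

lemma isTranslation_of_finite_conjugates {Γ : Subgroup (Iso n)} {r : ℝ}
    (hr : ∀ v : E n, ∃ γ ∈ Γ, dist γ.a v ≤ r) {g : Iso n}
    (hfin : {h : Iso n | ∃ k ∈ Γ, k * g * k⁻¹ = h}.Finite) : g.IsTranslation := by
  set S := {h : Iso n | ∃ k ∈ Γ, k * g * k⁻¹ = h}
  obtain ⟨D, hD⟩ := (hfin.image fun h => ‖h.a‖).bddAbove
  have hsmall : ∀ v, ∃ h ∈ S, ‖h.A v - v‖ ≤ D + (‖g.a‖ + 2 * r) := by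
    intro v
    obtain ⟨γ, hγ, hγv⟩ := hr v
    have hh : γ * g * γ⁻¹ ∈ S := ⟨γ, hγ, rfl⟩
    refine ⟨_, hh, (norm_A_sub_le _ v).trans (add_le_add (hD ⟨_, hh, rfl⟩) ?_)⟩
    calc dist ((γ * g * γ⁻¹).act v) v
        ≤ dist ((γ * g * γ⁻¹).act (γ.act 0)) (γ.act 0) + 2 * dist (γ.act 0) v :=
          dist_act_self_le _ _ _
      _ ≤ ‖g.a‖ + 2 * r := by
          rw [dist_conj_act_self, act_zero, act_zero, dist_zero_right]; gcongr
  by_contra hg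
  have hne : ∀ h ∈ S, ((h.A.toLinearEquiv : E n →ₗ[ℝ] E n) - LinearMap.id) ≠ 0 := by
    rintro _ ⟨k, -, rfl⟩ h0
    refine hg ((isTranslation_conj_iff k g).1 ((isTranslation_iff _).2 fun x => ?_))
    exact sub_eq_zero.1 (LinearMap.congr_fun h0 x)
  have := hfin.to_subtype
  obtain ⟨v, hv⟩ :=
    LinearMap.exists_forall_lt_norm_apply _ (fun h : S => hne h h.2) (D + (‖g.a‖ + 2 * r))
  obtain ⟨h, hS, hh⟩ := hsmall v
  exact (hv ⟨h, hS⟩).not_ge hh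

end Iso

/-- In a crystallographic group `Γ`, the translations are precisely
the elements having only finitely many conjugates in `Γ`; consequently every element
of the center `Z(Γ)` is a translation. -/
theorem stmt9 {n : ℕ} (Γ : Subgroup (Iso n)) (hΓ : Iso.IsCrystallographic Γ) :
    (∀ g ∈ Γ, (g.IsTranslation ↔ {h : Iso n | ∃ k ∈ Γ, k * g * k⁻¹ = h}.Finite)) ∧
    ∀ g ∈ Subgroup.centralizer (Γ : Set (Iso n)) ⊓ Γ, g.IsTranslation := by
  obtain ⟨hdisc, hcocompact⟩ := hΓ
  obtain ⟨r, hr⟩ := Iso.exists_forall_exists_dist_a_le hcocompact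
  have hconj : ∀ g ∈ Γ, (g.IsTranslation ↔ {h : Iso n | ∃ k ∈ Γ, k * g * k⁻¹ = h}.Finite) :=
    fun g hg => ⟨Iso.finite_conjugates_of_isTranslation hdisc hg,
      Iso.isTranslation_of_finite_conjugates hr⟩
  refine ⟨hconj, fun g hg => (hconj g hg.2).2 ((Set.finite_singleton g).subset ?_)⟩
  rintro _ ⟨k, hk, rfl⟩
  rw [Set.mem_singleton_iff, Subgroup.mem_centralizer_iff.1 hg.1 k hk, mul_inv_cancel_right]
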